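/- arXiv:2005.14065 — 2 statements merged into one kernel-verified Lean document; each statement's English description precedes it below -/
import Mathlib

section
/- Let C ⊆ ℝ^m be a full-dimensional closed polyhedral (convex) cone, and let x₁,…,x_m ∈ C with x = x₁ + ⋯ + x_m. Suppose (i) x lies in the interior of C, and (ii) for every i, the point x − x_i lies in the boundary of C. Then C = cone{x₁,…,x_m}; in particular, C is a simplicial cone. -/
open Finset

private def dotp {m : ℕ} (a y : Fin m → ℝ) : ℝ := ∑ i, a i * y i

private lemma dotp_cont {m : ℕ} (a : Fin m → ℝ) : Continuous (dotp a) :=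
  continuous_finset_sum _ fun i _ => continuous_const.mul (continuous_apply i)

private lemma dotp_sum {m n : ℕ} (a : Fin m → ℝ) (v : Fin n → (Fin m → ℝ)) :
    dotp a (∑ l, v l) = ∑ l, dotp a (v l) := by
  simp only [dotp, Finset.sum_apply, Finset.mul_sum]
  exact Finset.sum_comm

private lemma dotp_sub {m : ℕ} (a y z : Fin m → ℝ) :
    dotp a (y - z) = dotp a y - dotp a z := by
  simp [dotp, mul_sub, Finset.sum_sub_distrib]

private lemma dotp_add {m : ℕ} (a y z : Fin m → ℝ) :
    dotp a (y + z) = dotp a y + dotp a z := by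
  simp [dotp, mul_add, Finset.sum_add_distrib]

private lemma dotp_smul {m : ℕ} (a : Fin m → ℝ) (c : ℝ) (y : Fin m → ℝ) :
    dotp a (c • y) = c * dotp a y := by
  simp only [dotp, Finset.mul_sum, Pi.smul_apply, smul_eq_mul]
  exact Finset.sum_congr rfl fun i _ => by ring

private lemma dotp_sum_smul {m n : ℕ} (a : Fin m → ℝ) (c : Fin n → ℝ)
    (v : Fin n → (Fin m → ℝ)) :
    dotp a (∑ l, c l • v l) = ∑ l, c l * dotp a (v l) := by
  rw [dotp_sum]
  exact Finset.sum_congr rfl fun l _ => dotp_smul _ _ _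

private lemma interior_neg {m k : ℕ} {C : Set (Fin m → ℝ)} {A : Fin k → (Fin m → ℝ)}
    (hpoly : C = {y | ∀ j, ∑ i, A j i * y i ≤ 0}) {x : Fin m → ℝ} (hx : x ∈ interior C)
    {j : Fin k} (hj : A j ≠ 0) : dotp (A j) x < 0 := by
  have hxC : x ∈ C := interior_subset hx
  have hle : dotp (A j) x ≤ 0 := by rw [hpoly] at hxC; exact hxC j
  rcases lt_or_eq_of_le hle with h | h
  · exact h
  · exfalso
    obtain ⟨ε, hε, hball⟩ := Metric.mem_nhds_iff.mp (mem_interior_iff_mem_nhds.mp hx)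
    have hna : 0 < ‖A j‖ := norm_pos_iff.mpr hj
    set δ := ε / (2 * ‖A j‖) with hδdef
    have hδ : 0 < δ := div_pos hε (by positivity)
    have hmem : x + δ • A j ∈ C := by
      apply hball
      have : dist (x + δ • A j) x = δ * ‖A j‖ := by
        rw [dist_eq_norm]
        simp [norm_smul, abs_of_pos hδ]
      rw [Metric.mem_ball, this, hδdef]
      rw [div_mul_eq_mul_div, mul_comm 2 ‖A j‖, ← div_div]
      rw [mul_div_assoc, div_self (ne_of_gt hna), mul_one]
      linarith
    have hle2 : dotp (A j) (x + δ • A j) ≤ 0 := by rw [hpoly] at hmem; exact hmem j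
    have hS : 0 < dotp (A j) (A j) := by
      obtain ⟨i, hi⟩ := Function.ne_iff.mp hj
      exact Finset.sum_pos' (fun i _ => mul_self_nonneg _)
        ⟨i, Finset.mem_univ i, mul_self_pos.mpr hi⟩
    rw [dotp_add, dotp_smul, ← h] at hle2
    nlinarith

private lemma frontier_tight {m k : ℕ} {C : Set (Fin m → ℝ)} {A : Fin k → (Fin m → ℝ)}
    (hpoly : C = {y | ∀ j, ∑ i, A j i * y i ≤ 0}) {y : Fin m → ℝ} (hy : y ∈ frontier C) :
    y ∈ C ∧ ∃ j, A j ≠ 0 ∧ dotp (A j) y = 0 := by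
  have hclosed : IsClosed C := by
    rw [hpoly, Set.setOf_forall]
    exact isClosed_iInter fun j => isClosed_le (dotp_cont (A j)) continuous_const
  have hyC : y ∈ C := hclosed.closure_subset hy.1
  refine ⟨hyC, ?_⟩
  by_contra hno
  push_neg at hno
  have hylt : ∀ j, A j ≠ 0 → dotp (A j) y < 0 := fun j hj =>
    lt_of_le_of_ne (by rw [hpoly] at hyC; exact hyC j) (hno j hj)
  apply hy.2
  apply mem_interior.mpr
  refine ⟨⋂ j, {z | A j ≠ 0 → dotp (A j) z < 0}, ?_, ?_, ?_⟩
  · intro z hz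
    rw [hpoly]
    intro j
    by_cases hj : A j = 0
    · have : dotp (A j) z = 0 := by simp [dotp, hj]
      exact le_of_eq this
    · exact le_of_lt ((Set.mem_iInter.mp hz j) hj)
  · apply isOpen_iInter_of_finite
    intro j
    by_cases hj : A j = 0
    · simp [hj]
    · have : {z | A j ≠ 0 → dotp (A j) z < 0} = {z | dotp (A j) z < 0} := by
        ext z; simp [hj]
      rw [this]
      exact isOpen_lt (dotp_cont (A j)) continuous_const
  · exact Set.mem_iInter.mpr fun j hj => hylt j hj

/-- Let `C ⊆ ℝ^m` be a full-dimensional closed polyhedral cone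
(given by finitely many linear inequalities `A y ≤ 0`), and `x₁, …, x_m ∈ C` with
`x = x₁ + ⋯ + x_m` interior to `C` and each `x - xᵢ` on the boundary of `C`.
Then `C` is the cone generated by the `xᵢ`, and in particular simplicial
(the `xᵢ` are linearly independent). -/
theorem type_cone_simplicial (m : ℕ) (C : Set (Fin m → ℝ)) (x : Fin m → (Fin m → ℝ))
    (k : ℕ) (A : Fin k → (Fin m → ℝ))
    (hpoly : C = {y | ∀ j, ∑ i, A j i * y i ≤ 0})
    (hx : ∀ i, x i ∈ C)
    (hint : (∑ i, x i) ∈ interior C)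
    (hbd : ∀ i, (∑ j, x j) - x i ∈ frontier C) :
    C = {y | ∃ c : Fin m → ℝ, (∀ i, 0 ≤ c i) ∧ y = ∑ i, c i • x i} ∧
      LinearIndependent ℝ x := by
  have hCmem : ∀ y, y ∈ C ↔ ∀ j, dotp (A j) y ≤ 0 := by
    intro y; rw [hpoly]; rfl
  have key : ∀ i, ∃ a : Fin m → ℝ, (∀ l, l ≠ i → dotp a (x l) = 0) ∧ dotp a (x i) < 0 ∧
      (∀ y ∈ C, dotp a y ≤ 0) := by
    intro i
    obtain ⟨hzC, j, hj0, hjz⟩ := frontier_tight hpoly (hbd i)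
    have hxle : ∀ l, dotp (A j) (x l) ≤ 0 := fun l => (hCmem (x l)).mp (hx l) j
    have hsum0 : ∑ l ∈ Finset.univ.erase i, dotp (A j) (x l) = 0 := by
      have h1 : dotp (A j) ((∑ l, x l) - x i) =
          (∑ l, dotp (A j) (x l)) - dotp (A j) (x i) := by
        rw [dotp_sub, dotp_sum]
      have h2 : ∑ l, dotp (A j) (x l) =
          dotp (A j) (x i) + ∑ l ∈ Finset.univ.erase i, dotp (A j) (x l) :=
        (Finset.add_sum_erase _ _ (Finset.mem_univ i)).symm
      rw [hjz] at h1
      linarith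
    have hzero : ∀ l, l ≠ i → dotp (A j) (x l) = 0 := by
      intro l hl
      have := (Finset.sum_eq_zero_iff_of_nonpos
        (fun l _ => hxle l)).mp hsum0 l (Finset.mem_erase.mpr ⟨hl, Finset.mem_univ l⟩)
      exact this
    have hxint : dotp (A j) (∑ l, x l) < 0 := interior_neg hpoly hint hj0
    have hxi : dotp (A j) (x i) < 0 := by
      rw [dotp_sum, Finset.sum_eq_single i (fun l _ hl => hzero l hl)
        (fun h => absurd (Finset.mem_univ i) h)] at hxint
      exact hxint
    exact ⟨A j, hzero, hxi, fun y hy => (hCmem y).mp hy j⟩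
  choose L hL0 hLneg hLle using key
  have hli : LinearIndependent ℝ x := by
    rw [Fintype.linearIndependent_iff]
    intro c hc i
    have h1 : dotp (L i) (∑ l, c l • x l) = c i * dotp (L i) (x i) := by
      rw [dotp_sum_smul]
      exact Finset.sum_eq_single i (fun l _ hl => by rw [hL0 i l hl, mul_zero])
        (fun h => absurd (Finset.mem_univ i) h)
    rw [hc] at h1
    have h0 : dotp (L i) (0 : Fin m → ℝ) = 0 := by simp [dotp]
    rw [h0] at h1
    rcases mul_eq_zero.mp h1.symm with h | h
    · exact h
    · exact absurd h (ne_of_lt (hLneg i))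
  refine ⟨?_, hli⟩
  rcases Nat.eq_zero_or_pos m with hm | hm
  · subst hm
    have h0C : (0 : Fin 0 → ℝ) ∈ C := by
      have := interior_subset hint
      simpa using this
    ext y
    have hy0 : y = 0 := Subsingleton.elim y 0
    subst hy0
    simp only [Set.mem_setOf_eq]
    constructor
    · intro _
      exact ⟨0, fun i => le_refl 0, by simp⟩
    · intro _
      exact h0C
  · have : Nonempty (Fin m) := ⟨⟨0, hm⟩⟩
    have hcard : Fintype.card (Fin m) = Module.finrank ℝ (Fin m → ℝ) := by simp
    let b := basisOfLinearIndependentOfCardEqFinrank hli hcard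
    have hb : ⇑b = x := coe_basisOfLinearIndependentOfCardEqFinrank hli hcard
    ext y
    constructor
    · intro hy
      set c : Fin m → ℝ := fun i => b.repr y i with hcdef
      have hrep : y = ∑ l, c l • x l := by
        conv_lhs => rw [← b.sum_repr y]
        simp [hb, hcdef]
      refine ⟨c, ?_, hrep⟩
      intro i
      have h1 : dotp (L i) (∑ l, c l • x l) = c i * dotp (L i) (x i) := by
        rw [dotp_sum_smul]
        exact Finset.sum_eq_single i (fun l _ hl => by rw [hL0 i l hl, mul_zero])
          (fun h => absurd (Finset.mem_univ i) h)
      rw [← hrep] at h1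
      have h2 : dotp (L i) y ≤ 0 := hLle i y hy
      nlinarith [hLneg i]
    · rintro ⟨c, hc, rfl⟩
      rw [hCmem]
      intro j
      rw [dotp_sum_smul]
      apply Finset.sum_nonpos
      intro l _
      exact mul_nonpos_of_nonneg_of_nonpos (hc l) ((hCmem (x l)).mp (hx l) j)
end

section
/- Under the hypotheses of the previous setting (C full-dimensional closed convex cone, x = x₁+⋯+x_m with x interior to C and each x − x_i on the boundary of C), the vectors x₁,…,x_m are linearly independent. -/
open Filter Topology

/-- If a continuous linear functional is `< c` on the interior of a convex set
containing an interior point `X`, then it is `≤ c` on the whole set. -/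
lemma le_of_lt_on_interior {m : ℕ} {C : Set (Fin m → ℝ)} (hconv : Convex ℝ C)
    {X : Fin m → ℝ} (hX : X ∈ interior C) (f : (Fin m → ℝ) →L[ℝ] ℝ) (c : ℝ)
    (hlt : ∀ a ∈ interior C, f a < c) {y : Fin m → ℝ} (hy : y ∈ C) : f y ≤ c := by
  have key : ∀ t : ℝ, 0 < t → t ≤ 1 → f y + t * (f X - f y) ≤ c := by
    intro t ht ht1
    have hmem : t • X + (1 - t) • y ∈ interior C :=
      hconv.combo_interior_self_mem_interior hX hy ht (by linarith) (by ring)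
    have := hlt _ hmem
    have : f (t • X + (1 - t) • y) < c := this
    simp only [map_add, map_smul, smul_eq_mul] at this
    nlinarith
  have htend : Tendsto (fun t : ℝ => f y + t * (f X - f y)) (𝓝[>] 0) (𝓝 (f y)) := by
    have : Tendsto (fun t : ℝ => f y + t * (f X - f y)) (𝓝 0) (𝓝 (f y + 0 * (f X - f y))) :=
      (continuous_const.add (continuous_id.mul continuous_const)).tendsto 0
    simpa using this.mono_left nhdsWithin_le_nhds
  refine le_of_tendsto htend ?_
  filter_upwards [Ioo_mem_nhdsGT_of_mem (by norm_num : (0:ℝ) ∈ Set.Ico (0:ℝ) 1)] with t ht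
  exact key t ht.1 ht.2.le

/-- If `C ⊆ ℝ^m` is a full-dimensional closed convex cone,
`x₁, …, x_m ∈ C`, `x = x₁ + ⋯ + x_m` lies in the interior of `C`, and each
`x - xᵢ` lies in the boundary of `C`, then `x₁, …, x_m` are linearly independent. -/
theorem summands_linearly_independent (m : ℕ) (C : Set (Fin m → ℝ))
    (x : Fin m → (Fin m → ℝ))
    (hclosed : IsClosed C) (hconv : Convex ℝ C)
    (hcone : ∀ t : ℝ, 0 ≤ t → ∀ y ∈ C, t • y ∈ C)
    (hx : ∀ i, x i ∈ C)
    (hint : (∑ i, x i) ∈ interior C)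
    (hbd : ∀ i, (∑ j, x j) - x i ∈ frontier C) :
    LinearIndependent ℝ x := by
  set X := ∑ i, x i with hXdef
  -- for each i get a functional
  have hfun : ∀ i, ∃ f : (Fin m → ℝ) →L[ℝ] ℝ,
      (∀ y ∈ C, f y ≤ 0) ∧ f X < 0 ∧ f (X - x i) = 0 := by
    intro i
    have hz : X - x i ∈ frontier C := hbd i
    have hzC : X - x i ∈ C := hclosed.closure_eq ▸ hz.1
    have hznotint : X - x i ∉ interior C := hz.2
    obtain ⟨f, hf⟩ := geometric_hahn_banach_open_point (hconv.interior) isOpen_interior hznotint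
    -- f a < f (X - x i) for a ∈ interior C
    have hle : ∀ y ∈ C, f y ≤ f (X - x i) :=
      fun y hy => le_of_lt_on_interior hconv hint f _ hf hy
    -- f (X - x i) = 0
    have h2 : f ((2:ℝ) • (X - x i)) ≤ f (X - x i) := hle _ (hcone 2 (by norm_num) _ hzC)
    have h0 : f ((0:ℝ) • (X - x i)) ≤ f (X - x i) := hle _ (hcone 0 le_rfl _ hzC)
    simp only [map_smul, smul_eq_mul, zero_smul, map_zero] at h2 h0
    have hz0 : f (X - x i) = 0 := by linarith
    refine ⟨f, fun y hy => hz0 ▸ hle y hy, ?_, hz0⟩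
    have := hf X hint
    rw [hz0] at this
    exact this
  choose f hf0 hfX hfz using hfun
  -- f i (x i) = f i X < 0, and f i (x j) = 0 for j ≠ i
  have hxi_neg : ∀ i, f i (x i) < 0 := by
    intro i
    have : f i (x i) = f i X - f i (X - x i) := by rw [map_sub]; ring
    rw [this, hfz i, sub_zero]; exact hfX i
  have hxj_zero : ∀ i j, j ≠ i → f i (x j) = 0 := by
    intro i j hji
    have hsum : ∑ j ∈ Finset.univ.erase i, f i (x j) = 0 := by
      have : X - x i = ∑ j ∈ Finset.univ.erase i, x j := by
        rw [hXdef, eq_comm, Finset.sum_erase_eq_sub (Finset.mem_univ i)]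
      calc ∑ j ∈ Finset.univ.erase i, f i (x j)
          = f i (∑ j ∈ Finset.univ.erase i, x j) := (map_sum _ _ _).symm
        _ = f i (X - x i) := by rw [← this]
        _ = 0 := hfz i
    have hnonpos : ∀ j ∈ Finset.univ.erase i, f i (x j) ≤ 0 :=
      fun j _ => hf0 i _ (hx j)
    have := (Finset.sum_eq_zero_iff_of_nonpos hnonpos).mp hsum
    exact this j (Finset.mem_erase.mpr ⟨hji, Finset.mem_univ j⟩)
  rw [Fintype.linearIndependent_iff]
  intro g hg i
  have : f i (∑ j, g j • x j) = 0 := by rw [hg, map_zero]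
  rw [map_sum] at this
  simp only [map_smul, smul_eq_mul] at this
  rw [Finset.sum_eq_single i (fun j _ hji => by rw [hxj_zero i j hji, mul_zero])
    (fun h => absurd (Finset.mem_univ i) h)] at this
  have := mul_eq_zero.mp this
  rcases this with h | h
  · exact h
  · exact absurd h (hxi_neg i).ne
end
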